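/- A circular arc in ℂ subtending an angle of at most π, equipped with the Euclidean (chordal) metric, admits continuous transport: for fully supported diffuse Borel probability measures μ, ν on the arc there is a homeomorphism h of the arc fixing its endpoints with h_*ν = μ and sup_x |h(x) − x| ≤ δ(μ,ν). -/

import Mathlib

open MeasureTheory

/-- The optimal matching distance between two Borel measures. -/
noncomputable def matchDist {X : Type*} [PseudoMetricSpace X] [MeasurableSpace X]
    (μ ν : Measure X) : ℝ :=
  sInf {r : ℝ | ∀ U : Set X, MeasurableSet U →
    μ U ≤ ν (Metric.thickening r U) ∧ ν U ≤ μ (Metric.thickening r U)}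

/-- The circular arc `{e^{it} : t ∈ [0,θ]}` in `ℂ`. -/
def arc (θ : ℝ) : Set ℂ := (fun t : ℝ => Complex.exp (t * Complex.I)) '' Set.Icc 0 θ

/-!
Transport along the angle parametrisation `[0, θ] ≃ arc θ`. The distribution functions `F_μ, F_ν`
of the transported measures are continuous (no atoms), strictly increasing (full support) and map
`[0, θ]` onto `[0, 1]`, so the increasing rearrangement `T = F_μ⁻¹ ∘ F_ν` is an order isomorphism of
`[0, θ]` fixing its endpoints and pushing `ν` to `μ`.

For the displacement bound let `r` be admissible for `δ(μ, ν)` and `t < s = T t`. If the chord from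
`t` to `s` were longer than `r`, then by continuity so would be the chord from `t` to some `v < s`.
Since `θ ≤ π`, a chord is at least as long as every chord nested inside it, so the `r`-thickening
of `U = [0, t]` stays inside `[0, v)`, and then `F_ν(t) = ν(U) ≤ μ(U_r) ≤ F_μ(v) < F_μ(s) = F_ν(t)`.
-/

open Set Metric Topology ProbabilityTheory Function

lemma MeasureTheory.NullSingletonClass.map_of_injective {α β : Type*} [MeasurableSpace α]
    [MeasurableSpace β] [MeasurableSingletonClass β] {μ : Measure α} [NullSingletonClass μ]
    {f : α → β} (hf : Measurable f) (hinj : Injective f) : NullSingletonClass (μ.map f) :=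
  ⟨fun y => by
    rw [Measure.map_apply hf (measurableSet_singleton y)]
    exact (subsingleton_singleton.preimage hinj).measure_zero μ⟩

lemma ProbabilityTheory.continuous_cdf (m : Measure ℝ) [IsProbabilityMeasure m]
    [NullSingletonClass m] : Continuous (cdf m) := by
  refine continuous_iff_continuousAt.2 fun x =>
    continuousAt_iff_continuous_left_right.2 ⟨?_, (cdf m).right_continuous x⟩
  have hjump : ENNReal.ofReal (cdf m x - leftLim (cdf m) x) = 0 := by
    rw [← StieltjesFunction.measure_singleton, measure_cdf, measure_singleton]
  rw [← continuousWithinAt_Iio_iff_Iic, (monotone_cdf m).continuousWithinAt_Iio_iff_leftLim_eq]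
  exact le_antisymm ((monotone_cdf m).leftLim_le le_rfl)
    (sub_nonpos.1 (ENNReal.ofReal_eq_zero.1 hjump))

lemma OrderIso.apply_Icc_left {a b : ℝ} (e : Icc a b ≃o Icc a b) (hab : a ≤ b) :
    e ⟨a, left_mem_Icc.2 hab⟩ = ⟨a, left_mem_Icc.2 hab⟩ :=
  e.map_bot' (fun x => x.2.1) fun y => y.2.1

lemma OrderIso.apply_Icc_right {a b : ℝ} (e : Icc a b ≃o Icc a b) (hab : a ≤ b) :
    e ⟨b, right_mem_Icc.2 hab⟩ = ⟨b, right_mem_Icc.2 hab⟩ :=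
  e.map_top' (fun x => x.2.2) fun y => y.2.2

section IccCdf

variable {a b : ℝ} (μ ν : Measure (Icc a b))

noncomputable def iccCdf (t : Icc a b) : ℝ := μ.real (Iic t)

lemma iccCdf_eq_cdf_map [IsProbabilityMeasure μ] (t : Icc a b) :
    iccCdf μ t = cdf (μ.map (↑)) t := by
  have : IsProbabilityMeasure (μ.map ((↑) : Icc a b → ℝ)) :=
    Measure.isProbabilityMeasure_map measurable_subtype_coe.aemeasurable
  rw [cdf_eq_real, map_measureReal_apply measurable_subtype_coe measurableSet_Iic]
  rfl

lemma continuous_iccCdf [IsProbabilityMeasure μ] [NullSingletonClass μ] :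
    Continuous (iccCdf μ) := by
  have : IsProbabilityMeasure (μ.map ((↑) : Icc a b → ℝ)) :=
    Measure.isProbabilityMeasure_map measurable_subtype_coe.aemeasurable
  have := NullSingletonClass.map_of_injective (μ := μ) measurable_subtype_coe
    Subtype.val_injective
  rw [funext (iccCdf_eq_cdf_map μ)]
  exact (continuous_cdf _).comp continuous_subtype_val

lemma strictMono_iccCdf [IsFiniteMeasure μ] [μ.IsOpenPosMeasure] : StrictMono (iccCdf μ) := by
  intro s t hst
  have hsplit : μ (Iic s) + μ (Ioo s t) ≤ μ (Iic t) := calc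
    μ (Iic s) + μ (Ioo s t) = μ (Iic s ∪ Ioo s t) :=
      (measure_union ((Iic_disjoint_Ioi le_rfl).mono_right Ioo_subset_Ioi_self)
        measurableSet_Ioo).symm
    _ ≤ μ (Iic t) := measure_mono <|
      union_subset (Iic_subset_Iic.2 hst.le) (Ioo_subset_Ioc_self.trans Ioc_subset_Iic_self)
  have hlt := (ENNReal.lt_add_right (measure_ne_top μ (Iic s))
    ((Measure.measure_Ioo_pos μ).2 hst).ne').trans_le hsplit
  exact (ENNReal.toReal_lt_toReal (measure_ne_top _ _) (measure_ne_top _ _)).2 hlt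

lemma iccCdf_left [NullSingletonClass μ] (hab : a ≤ b) :
    iccCdf μ ⟨a, left_mem_Icc.2 hab⟩ = 0 := by
  have hsub : (Iic (⟨a, left_mem_Icc.2 hab⟩ : Icc a b)).Subsingleton := fun x hx y hy =>
    Subtype.ext ((le_antisymm hx x.2.1).trans (le_antisymm hy y.2.1).symm)
  simp [iccCdf, measureReal_def, hsub.measure_zero μ]

lemma iccCdf_right [IsProbabilityMeasure μ] (hab : a ≤ b) :
    iccCdf μ ⟨b, right_mem_Icc.2 hab⟩ = 1 := by
  have huniv : Iic (⟨b, right_mem_Icc.2 hab⟩ : Icc a b) = univ :=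
    eq_univ_of_forall fun x => x.2.2
  simp [iccCdf, huniv]

lemma range_iccCdf [IsProbabilityMeasure μ] [NullSingletonClass μ] (hab : a ≤ b) :
    range (iccCdf μ) = Icc 0 1 := by
  have := Subtype.preconnectedSpace (isPreconnected_Icc (a := a) (b := b))
  refine (range_subset_iff.2 fun t => mem_Icc.2 ⟨measureReal_nonneg, measureReal_le_one⟩).antisymm
    ?_
  have := intermediate_value_univ (⟨a, left_mem_Icc.2 hab⟩ : Icc a b) ⟨b, right_mem_Icc.2 hab⟩
    (continuous_iccCdf μ)
  rwa [iccCdf_left μ hab, iccCdf_right μ hab] at this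

variable [IsProbabilityMeasure μ] [NullSingletonClass μ] [μ.IsOpenPosMeasure]
  [IsProbabilityMeasure ν] [NullSingletonClass ν] [ν.IsOpenPosMeasure]

/-- The increasing rearrangement `F_μ⁻¹ ∘ F_ν` of `[a, b]`. -/
noncomputable def cdfTransport (hab : a ≤ b) : Icc a b ≃o Icc a b :=
  ((StrictMono.orderIso _ (strictMono_iccCdf ν)).trans
    (OrderIso.setCongr _ _ ((range_iccCdf ν hab).trans (range_iccCdf μ hab).symm))).trans
    (StrictMono.orderIso _ (strictMono_iccCdf μ)).symm

lemma iccCdf_cdfTransport (hab : a ≤ b) (t : Icc a b) :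
    iccCdf μ (cdfTransport μ ν hab t) = iccCdf ν t := by
  change Subtype.val (StrictMono.orderIso _ (strictMono_iccCdf μ) (cdfTransport μ ν hab t)) = _
  rw [cdfTransport, OrderIso.trans_apply, OrderIso.trans_apply, OrderIso.apply_symm_apply]
  rfl

lemma map_cdfTransport (hab : a ≤ b) : ν.map (cdfTransport μ ν hab) = μ := by
  set T := cdfTransport μ ν hab
  refine Measure.ext_of_Iic _ _ fun s => ?_
  rw [Measure.map_apply T.monotone.measurable measurableSet_Iic,
    T.preimage_Iic, ← ofReal_measureReal, ← ofReal_measureReal]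
  have := iccCdf_cdfTransport μ ν hab (T.symm s)
  rw [T.apply_symm_apply] at this
  exact congrArg ENNReal.ofReal this.symm

end IccCdf

section Transport

variable {X : Type*} [PseudoMetricSpace X] [MeasurableSpace X]

lemma pos_of_forall_measure_le_measure_thickening {μ ν : Measure X} [NeZero ν] {r : ℝ}
    (hr : ∀ U, MeasurableSet U → ν U ≤ μ (thickening r U)) : 0 < r := by
  by_contra! h
  have huniv := hr univ .univ
  rw [thickening_of_nonpos h, measure_empty, nonpos_iff_eq_zero, Measure.measure_univ_eq_zero]
    at huniv
  exact NeZero.ne ν huniv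

lemma le_matchDist [BoundedSpace X] {μ ν : Measure X} [IsProbabilityMeasure μ]
    [IsProbabilityMeasure ν] {d : ℝ}
    (h : ∀ r, (∀ U, MeasurableSet U → μ U ≤ ν (thickening r U) ∧ ν U ≤ μ (thickening r U)) →
      d ≤ r) :
    d ≤ matchDist μ ν := by
  refine le_csInf ⟨diam (univ : Set X) + 1, fun U _ => ?_⟩ h
  rcases U.eq_empty_or_nonempty with rfl | ⟨y, hy⟩
  · simp
  · have huniv : thickening (diam (univ : Set X) + 1) U = univ :=
      eq_univ_of_forall fun x => mem_thickening_iff.2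
        ⟨y, hy, (dist_le_diam_of_mem BoundedSpace.bounded_univ trivial trivial).trans_lt
          (lt_add_one _)⟩
    simp [huniv, prob_le_one]

variable [BorelSpace X] {a b : ℝ}

lemma dist_le_of_iccCdf_map_eq (P : Icc a b ≃ₜ X)
    (hnest : ∀ u s v w, u ≤ s → s ≤ v → v ≤ w → dist (P s) (P v) ≤ dist (P u) (P w))
    {μ ν : Measure X} [IsFiniteMeasure μ] [μ.IsOpenPosMeasure]
    {t s : Icc a b} (hts : t < s) (hcdf : iccCdf (μ.map P.symm) s = iccCdf (ν.map P.symm) t)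
    {r : ℝ} (hr : ∀ U, MeasurableSet U → ν U ≤ μ (thickening r U)) :
    dist (P t) (P s) ≤ r := by
  by_contra! hrs
  have hO : {v | r < dist (P t) (P v)} ∈ 𝓝 s :=
    (isOpen_lt continuous_const (by fun_prop)).mem_nhds hrs
  obtain ⟨l, hls, hl⟩ := exists_Ioc_subset_of_mem_nhds hO ⟨t, hts⟩
  obtain ⟨v, hv, hvs⟩ := exists_between (max_lt hls hts)
  have hrv : r < dist (P t) (P v) := hl ⟨(le_max_left _ _).trans_lt hv, hvs.le⟩
  have hthick : thickening r (P.symm ⁻¹' Iic t) ⊆ P.symm ⁻¹' Iio v := by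
    intro x hx
    obtain ⟨y, hyt, hxy⟩ := mem_thickening_iff.1 hx
    by_contra hvx
    have := hnest (P.symm y) t v (P.symm x) hyt ((le_max_right _ _).trans_lt hv).le (not_lt.1 hvx)
    rw [P.apply_symm_apply, P.apply_symm_apply] at this
    linarith [dist_comm x y]
  have hm : Measurable P.symm := P.symm.continuous.measurable
  have : (μ.map P.symm).IsOpenPosMeasure :=
    P.symm.continuous.isOpenPosMeasure_map P.symm.surjective
  have hle : iccCdf (ν.map P.symm) t ≤ iccCdf (μ.map P.symm) v := calc
    _ = ν.real (P.symm ⁻¹' Iic t) := map_measureReal_apply hm measurableSet_Iic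
    _ ≤ μ.real (thickening r (P.symm ⁻¹' Iic t)) :=
      ENNReal.toReal_mono (measure_ne_top _ _) (hr _ (hm measurableSet_Iic))
    _ ≤ μ.real (P.symm ⁻¹' Iic v) :=
      measureReal_mono (hthick.trans (preimage_mono Iio_subset_Iic_self))
    _ = iccCdf (μ.map P.symm) v := (map_measureReal_apply hm measurableSet_Iic).symm
  exact (strictMono_iccCdf _ hvs).not_ge (hcdf ▸ hle)

theorem exists_homeomorph_map_eq_dist_le_matchDist (P : Icc a b ≃ₜ X) (hab : a ≤ b)
    (hnest : ∀ u s v w, u ≤ s → s ≤ v → v ≤ w → dist (P s) (P v) ≤ dist (P u) (P w))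
    (μ ν : Measure X) [IsProbabilityMeasure μ] [IsProbabilityMeasure ν]
    [NullSingletonClass μ] [NullSingletonClass ν] [μ.IsOpenPosMeasure] [ν.IsOpenPosMeasure] :
    ∃ h : X ≃ₜ X, h (P ⟨a, left_mem_Icc.2 hab⟩) = P ⟨a, left_mem_Icc.2 hab⟩ ∧
      h (P ⟨b, right_mem_Icc.2 hab⟩) = P ⟨b, right_mem_Icc.2 hab⟩ ∧
      ν.map h = μ ∧ ∀ x, dist (h x) x ≤ matchDist μ ν := by
  have hm : Measurable P.symm := P.symm.continuous.measurable
  have := Measure.isProbabilityMeasure_map (μ := μ) hm.aemeasurable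
  have := Measure.isProbabilityMeasure_map (μ := ν) hm.aemeasurable
  have := NullSingletonClass.map_of_injective (μ := μ) hm P.symm.injective
  have := NullSingletonClass.map_of_injective (μ := ν) hm P.symm.injective
  have := P.symm.continuous.isOpenPosMeasure_map (μ := μ) P.symm.surjective
  have := P.symm.continuous.isOpenPosMeasure_map (μ := ν) P.symm.surjective
  have := P.compactSpace
  set T := cdfTransport (μ.map P.symm) (ν.map P.symm) hab
  have hPT : ∀ t, (P.symm.trans (T.toHomeomorph.trans P)) (P t) = P (T t) := by simp
  refine ⟨P.symm.trans (T.toHomeomorph.trans P), ?_, ?_, ?_, fun x => ?_⟩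
  · rw [hPT, T.apply_Icc_left hab]
  · rw [hPT, T.apply_Icc_right hab]
  · have hPm : Measurable P := P.continuous.measurable
    change ν.map ((P ∘ T) ∘ P.symm) = μ
    rw [← Measure.map_map (hPm.comp T.monotone.measurable) hm,
      ← Measure.map_map hPm T.monotone.measurable, map_cdfTransport, Measure.map_map hPm hm,
      P.self_comp_symm, Measure.map_id]
  refine le_matchDist fun r hr => ?_
  obtain ⟨t, rfl⟩ := P.surjective x
  rw [hPT]
  rcases lt_trichotomy t (T t) with hlt | heq | hgt
  · rw [dist_comm]
    exact dist_le_of_iccCdf_map_eq P hnest hlt (iccCdf_cdfTransport _ _ hab t)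
      fun U hU => (hr U hU).2
  · rw [← heq, dist_self]
    exact (pos_of_forall_measure_le_measure_thickening fun U hU => (hr U hU).2).le
  · exact dist_le_of_iccCdf_map_eq P hnest hgt (iccCdf_cdfTransport _ _ hab t).symm
      fun U hU => (hr U hU).1

end Transport

section Arc

open Complex Real

lemma Complex.norm_exp_mul_I_sub_exp_mul_I (s t : ℝ) :
    ‖exp (s * I) - exp (t * I)‖ = 2 * |Real.sin ((s - t) / 2)| := by
  have hfactor : exp (s * I) - exp (t * I) = exp (t * I) * (exp (I * ↑(s - t)) - 1) := by
    rw [mul_sub, ← exp_add, mul_one]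
    congr 2
    push_cast
    ring
  rw [hfactor, norm_mul, norm_exp_ofReal_mul_I, one_mul, norm_exp_I_mul_ofReal_sub_one,
    norm_mul, Real.norm_two, Real.norm_eq_abs]

lemma Complex.injOn_exp_mul_I : InjOn (fun t : ℝ => exp (t * I)) (Ioc (-π) π) := by
  intro s hs t ht hst
  rw [← arg_cos_add_sin_mul_I hs, ← arg_cos_add_sin_mul_I ht, ← exp_mul_I, ← exp_mul_I]
  exact congrArg arg hst

variable {θ : ℝ}

noncomputable def arcHomeomorph (hθ : θ ≤ π) : Icc 0 θ ≃ₜ arc θ :=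
  Continuous.homeoOfEquivCompactToT2
    (f := Equiv.Set.imageOfInjOn (fun t : ℝ => exp (t * I)) (Icc 0 θ)
      (injOn_exp_mul_I.mono (Icc_subset_Ioc (by linarith [pi_pos]) hθ)))
    (continuous_induced_rng.2 (by fun_prop : Continuous fun t : Icc 0 θ => exp (t * I)))

lemma dist_arcHomeomorph_of_le (hθ : θ ≤ π) {s t : Icc 0 θ} (hst : s ≤ t) :
    dist (arcHomeomorph hθ t) (arcHomeomorph hθ s) = 2 * Real.sin ((t - s) / 2) := by
  have := Subtype.coe_le_coe.2 hst
  rw [Subtype.dist_eq, dist_eq_norm]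
  change ‖exp ((t : ℝ) * I) - exp ((s : ℝ) * I)‖ = _
  rw [norm_exp_mul_I_sub_exp_mul_I, abs_of_nonneg (sin_nonneg_of_nonneg_of_le_pi (by linarith)
    (by linarith [s.2.1, t.2.2]))]

lemma dist_arcHomeomorph_le (hθ : θ ≤ π) {u s v w : Icc 0 θ} (hus : u ≤ s) (hsv : s ≤ v)
    (hvw : v ≤ w) :
    dist (arcHomeomorph hθ s) (arcHomeomorph hθ v) ≤
      dist (arcHomeomorph hθ u) (arcHomeomorph hθ w) := by
  rw [dist_comm, dist_arcHomeomorph_of_le hθ hsv, dist_comm,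
    dist_arcHomeomorph_of_le hθ (hus.trans (hsv.trans hvw))]
  have := Subtype.coe_le_coe.2 hus
  have := Subtype.coe_le_coe.2 hsv
  have := Subtype.coe_le_coe.2 hvw
  gcongr 2 * ?_
  exact sin_le_sin_of_le_of_le_pi_div_two (by linarith [pi_pos]) (by linarith [u.2.1, w.2.2])
    (by linarith)

end Arc

/-- A circular arc subtending an angle at most `π`, with the Euclidean (chordal)
metric, admits continuous transport: for fully supported diffuse Borel probability
measures `μ, ν` on the arc there is a homeomorphism of the arc fixing its endpoints,
pushing `ν` to `μ` and moving points at most `δ(μ,ν)`. -/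
theorem stmt7 (θ : ℝ) (hθ : θ ∈ Set.Icc 0 Real.pi)
    (μ ν : Measure (arc θ)) [IsProbabilityMeasure μ] [IsProbabilityMeasure ν]
    (hdiffμ : ∀ x : arc θ, μ {x} = 0) (hdiffν : ∀ x : arc θ, ν {x} = 0)
    (hfullμ : ∀ U : Set (arc θ), IsOpen U → U.Nonempty → 0 < μ U)
    (hfullν : ∀ U : Set (arc θ), IsOpen U → U.Nonempty → 0 < ν U) :
    ∃ h : arc θ ≃ₜ arc θ,
      h ⟨Complex.exp ((0 : ℝ) * Complex.I), ⟨0, ⟨le_refl 0, hθ.1⟩, rfl⟩⟩ =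
        ⟨Complex.exp ((0 : ℝ) * Complex.I), ⟨0, ⟨le_refl 0, hθ.1⟩, rfl⟩⟩ ∧
      h ⟨Complex.exp (θ * Complex.I), ⟨θ, ⟨hθ.1, le_refl θ⟩, rfl⟩⟩ =
        ⟨Complex.exp (θ * Complex.I), ⟨θ, ⟨hθ.1, le_refl θ⟩, rfl⟩⟩ ∧
      Measure.map h ν = μ ∧
      ∀ x : arc θ, dist (h x) x ≤ matchDist μ ν := by
  have : NullSingletonClass μ := ⟨hdiffμ⟩
  have : NullSingletonClass ν := ⟨hdiffν⟩
  have : μ.IsOpenPosMeasure := ⟨fun U hU hne => (hfullμ U hU hne).ne'⟩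
  have : ν.IsOpenPosMeasure := ⟨fun U hU hne => (hfullν U hU hne).ne'⟩
  exact exists_homeomorph_map_eq_dist_le_matchDist (arcHomeomorph hθ.2) hθ.1
    (fun _ _ _ _ => dist_arcHomeomorph_le hθ.2) μ ν
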